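/- arXiv:1511.02686 — 3 statements merged into one kernel-verified Lean document; each statement's English description precedes it below -/
import Mathlib

section
/- For every n ≥ 1, k ≥ 1 and every continuous group homomorphism ρ : 𝕋ⁿ → U(k), the continuous map 𝕋ⁿ → SU(2k) given by a ↦ diag(ρ(a), conj ρ(a)) is null-homotopic, i.e. homotopic through continuous maps to the constant map with value the 2k×2k identity matrix. -/
open Matrix

/-- If `A` is a unitary matrix then the block-diagonal matrix `diag(A, conj A)` (where
`conj A` is the entrywise complex conjugate) is special unitary. -/
theorem fromBlocks_conj_mem_specialUnitaryGroup {k : ℕ} (A : Matrix (Fin k) (Fin k) ℂ)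
    (hA : A ∈ Matrix.unitaryGroup (Fin k) ℂ) :
    Matrix.fromBlocks A 0 0 (A.map (starRingEnd ℂ)) ∈
      Matrix.specialUnitaryGroup (Fin k ⊕ Fin k) ℂ := by
  have hA' : A * Aᴴ = 1 := Matrix.mem_unitaryGroup_iff.mp hA
  have hmapH : (A.map (starRingEnd ℂ))ᴴ = Aᵀ := by
    ext i j; simp [Matrix.conjTranspose_apply, Matrix.map_apply]
  have hmap : A.map (starRingEnd ℂ) * (A.map (starRingEnd ℂ))ᴴ = 1 := by
    rw [hmapH]
    have h1 : (A * Aᴴ).map (starRingEnd ℂ) = (1 : Matrix (Fin k) (Fin k) ℂ) := by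
      rw [hA', Matrix.map_one _ (map_zero _) (map_one _)]
    have h2 : (A * Aᴴ).map (starRingEnd ℂ) = A.map (starRingEnd ℂ) * Aᴴ.map (starRingEnd ℂ) :=
      Matrix.map_mul
    have h3 : Aᴴ.map (starRingEnd ℂ) = Aᵀ := by
      ext i j; simp [Matrix.conjTranspose_apply, Matrix.map_apply]
    rw [h2, h3] at h1
    exact h1
  rw [Matrix.mem_specialUnitaryGroup_iff]
  refine ⟨?_, ?_⟩
  · rw [Matrix.mem_unitaryGroup_iff, Matrix.star_eq_conjTranspose,
      Matrix.fromBlocks_conjTranspose, Matrix.fromBlocks_multiply]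
    simp only [Matrix.conjTranspose_zero, Matrix.mul_zero, Matrix.zero_mul, add_zero, zero_add,
      hA', hmap]
    exact Matrix.fromBlocks_one
  · rw [Matrix.det_fromBlocks_zero₂₁,
      show (A.map (starRingEnd ℂ)).det = starRingEnd ℂ A.det from by
        rw [← RingHom.mapMatrix_apply, RingHom.map_det]]
    simpa using Unitary.mul_star_self_of_mem (Matrix.det_of_mem_unitary hA)

/-- Given a continuous family `ρ` of unitary `k × k` matrices parametrized by a topological
space `X`, the continuous map `X → SU(2k)`, `a ↦ diag(ρ a, conj (ρ a))`. -/
noncomputable def blockDiagConjMap {X : Type} [TopologicalSpace X] {k : ℕ}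
    (ρ : X → Matrix.unitaryGroup (Fin k) ℂ) (hρ : Continuous ρ) :
    C(X, Matrix.specialUnitaryGroup (Fin k ⊕ Fin k) ℂ) where
  toFun a := ⟨Matrix.fromBlocks (ρ a : Matrix (Fin k) (Fin k) ℂ) 0 0
      ((ρ a : Matrix (Fin k) (Fin k) ℂ).map (starRingEnd ℂ)),
    fromBlocks_conj_mem_specialUnitaryGroup _ (ρ a).2⟩
  continuous_toFun := by
    have hcoe : Continuous fun a : X => (ρ a : Matrix (Fin k) (Fin k) ℂ) :=
      continuous_subtype_val.comp hρ
    exact Continuous.subtype_mk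
      (Continuous.matrix_fromBlocks hcoe continuous_const continuous_const
        (hcoe.matrix_map continuous_star)) _

/-!
A continuous homomorphism `ρ` of the torus into `U(k)` has commuting unitary values, so they are
simultaneously diagonalised by one unitary `W`; consequently `conj ρ(a) = U ρ(a)⁻¹ U⁻¹` for the
fixed unitary `U = conj W · W⁻¹`. With the block matrix `J = [[0, -U⁻¹], [U, 0]]` this gives
`diag(ρ a, conj ρ a) = ⁅diag(ρ a, 1), J⁆`. Since `J² = -1`, the unitaries
`J_θ = cos θ + (sin θ) J` join `J = J_{π/2}` to `1 = J_0`, and commutators have determinant one,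
so `(θ, a) ↦ ⁅diag(ρ a, 1), J_θ⁆` is a null-homotopy inside `SU(2k)`.
-/

open scoped commutatorElement ComplexStarModule

open Module in
theorem LinearMap.IsSymmetric.exists_orthonormalBasis_forall_apply_eq_smul
    {𝕜 E ι : Type*} [RCLike 𝕜] [NormedAddCommGroup E] [InnerProductSpace 𝕜 E]
    [FiniteDimensional 𝕜 E] {T : ι → E →ₗ[𝕜] E} (hT : ∀ i, (T i).IsSymmetric)
    (hC : Pairwise (Function.onFun Commute T)) {m : ℕ} (hm : finrank 𝕜 E = m) :
    ∃ b : OrthonormalBasis (Fin m) 𝕜 E, ∀ a i, ∃ μ : 𝕜, T i (b a) = μ • b a := by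
  classical
  let V : (ι → 𝕜) → Submodule 𝕜 E := fun χ ↦ ⨅ i, End.eigenspace (T i) (χ i)
  have hV : OrthogonalFamily 𝕜 (fun χ ↦ V χ) fun χ ↦ (V χ).subtypeₗᵢ :=
    orthogonalFamily_iInf_eigenspaces hT
  -- `subordinateOrthonormalBasis` needs a finite index set: keep the nonzero joint eigenspaces
  let S := {χ // V χ ≠ ⊥}
  have : Fintype S := (WellFoundedGT.finite_ne_bot_of_iSupIndep hV.independent).fintype
  have hVS := hV.comp (Subtype.val_injective (p := fun χ ↦ V χ ≠ ⊥))
  have hint : DirectSum.IsInternal fun χ : S ↦ V χ := by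
    rw [hVS.isInternal_iff, iSup_ne_bot_subtype V, iSup_iInf_eq_top_of_commute hT hC,
      Submodule.top_orthogonal_eq_bot]
  exact ⟨hint.subordinateOrthonormalBasis hm hVS, fun a i ↦ ⟨_, End.mem_eigenspace_iff.mp
    ((Submodule.mem_iInf _).mp (hint.subordinateOrthonormalBasis_subordinate hm a hVS) i)⟩⟩

section Commute

variable {A : Type*} [Ring A] [StarRing A] [Algebra ℂ A] [StarModule ℂ A] {a b : A}

theorem Commute.realPart_left (h : Commute a b) (h' : Commute (star a) b) :
    Commute (ℜ a : A) b := by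
  rw [realPart_apply_coe]
  exact (h.add_left h').smul_left _

theorem Commute.imaginaryPart_left (h : Commute a b) (h' : Commute (star a) b) :
    Commute (ℑ a : A) b := by
  rw [imaginaryPart_apply_coe]
  exact ((h.sub_left h').smul_left _).smul_left _

end Commute

theorem Unitary.joined_one_of_mul_self_eq_neg_one {A : Type*} [Ring A] [StarRing A]
    [Algebra ℝ A] [StarModule ℝ A] [TopologicalSpace A] [ContinuousAdd A] [ContinuousSMul ℝ A]
    (u : unitary A) (hu : (u : A) * u = -1) : Joined u 1 := by
  have hstar : star (u : A) = -u := by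
    rw [← one_mul (star (u : A)), ← neg_neg (1 : A), ← hu, neg_mul, mul_assoc,
      Unitary.mul_star_self_of_mem u.2, mul_one]
  let rot : ℝ → A := fun θ ↦ Real.cos θ • 1 + Real.sin θ • (u : A)
  have hrot : ∀ θ, rot θ ∈ unitary A := fun θ ↦ by
    have hstar_rot : star (rot θ) = Real.cos θ • 1 - Real.sin θ • (u : A) := by
      simp [rot, star_smul, hstar, sub_eq_add_neg]
    have hpyth : (Real.cos θ * Real.cos θ) • 1 + (Real.sin θ * Real.sin θ) • (1 : A) = 1 := by
      rw [← add_smul, ← sq, ← sq, Real.cos_sq_add_sin_sq, one_smul]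
    rw [Unitary.mem_iff, hstar_rot]
    constructor <;>
    · simp only [rot, sub_mul, add_mul, mul_sub, mul_add, smul_mul_smul, one_mul, mul_one, hu,
        mul_comm (Real.sin θ) (Real.cos θ)]
      refine Eq.trans ?_ hpyth
      simp only [smul_neg]
      abel
  have hcont : Continuous fun t : unitInterval ↦ rot (Real.pi / 2 * t) := by fun_prop
  refine ⟨(Path.mk ⟨fun t ↦ ⟨rot (Real.pi / 2 * t), hrot _⟩, hcont.subtype_mk _⟩ ?_ ?_).symm⟩
  · ext; simp [rot]
  · ext; simp [rot]

namespace Matrix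

section Diagonalization

variable {n : Type*} [Fintype n] [DecidableEq n]

theorem star_mul_mul_eq_diagonal_of_orthonormalBasis {𝕜 : Type*} [RCLike 𝕜]
    (b : OrthonormalBasis n 𝕜 (EuclideanSpace 𝕜 n)) {A : Matrix n n 𝕜} {μ : n → 𝕜}
    (h : ∀ j, A *ᵥ b j = μ j • b j) :
    star ((EuclideanSpace.basisFun n 𝕜).toBasis.toMatrix b) * A *
      (EuclideanSpace.basisFun n 𝕜).toBasis.toMatrix b = diagonal μ := by
  set W := (EuclideanSpace.basisFun n 𝕜).toBasis.toMatrix b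
  have hW : ∀ j, W *ᵥ Pi.single j 1 = b j := fun j ↦ by
    rw [mulVec_single_one]; rfl
  have hWs : ∀ j, star W *ᵥ b j = Pi.single j 1 := fun j ↦ by
    rw [← hW, mulVec_mulVec, mem_unitaryGroup_iff'.mp
      ((EuclideanSpace.basisFun n 𝕜).toMatrix_orthonormalBasis_mem_unitary b), one_mulVec]
  ext i j
  have hcol : (star W * A * W) *ᵥ Pi.single j 1 = μ j • Pi.single j 1 := by
    rw [← mulVec_mulVec, ← mulVec_mulVec, hW, h, mulVec_smul, hWs]
  have hentry := congrFun hcol i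
  rw [mulVec_single_one, col_apply] at hentry
  rw [hentry, diagonal_apply]
  by_cases hij : i = j <;> simp [hij]

theorem exists_unitary_forall_isDiag_of_isHermitian {𝕜 ι : Type*} [RCLike 𝕜]
    {H : ι → Matrix n n 𝕜} (hH : ∀ i, (H i).IsHermitian) (hC : ∀ i j, Commute (H i) (H j)) :
    ∃ W ∈ unitaryGroup n 𝕜, ∀ i, (star W * H i * W).IsDiag := by
  have hCT : Pairwise (Function.onFun Commute fun i ↦ toEuclideanLin (H i)) := fun i j _ ↦
    LinearMap.ext fun x ↦ by simp [toLpLin_apply, mulVec_mulVec, (hC i j).eq]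
  obtain ⟨b, hb⟩ := LinearMap.IsSymmetric.exists_orthonormalBasis_forall_apply_eq_smul
    (fun i ↦ isSymmetric_toEuclideanLin_iff.mpr (hH i)) hCT finrank_euclideanSpace
  let b' := b.reindex (Fintype.equivFin n).symm
  refine ⟨_, (EuclideanSpace.basisFun n 𝕜).toMatrix_orthonormalBasis_mem_unitary b', fun i ↦ ?_⟩
  choose μ hμ using fun j ↦ hb (Fintype.equivFin n j) i
  rw [star_mul_mul_eq_diagonal_of_orthonormalBasis b' (μ := μ) fun j ↦ ?_]
  · exact isDiag_diagonal μ
  · simpa [b'] using congrArg WithLp.ofLp (hμ j)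

theorem exists_unitary_forall_isDiag_of_commute {ι : Type*} {M : ι → Matrix n n ℂ}
    (hC : ∀ i j, Commute (M i) (M j)) (hCs : ∀ i j, Commute (M i) (star (M j))) :
    ∃ W ∈ unitaryGroup n ℂ, ∀ i, (star W * M i * W).IsDiag := by
  let H : ι ⊕ ι → Matrix n n ℂ := Sum.elim (fun i ↦ ℜ (M i)) (fun i ↦ ℑ (M i))
  have hH : ∀ p, (H p).IsHermitian := by
    rintro (i | i) <;> exact isHermitian_iff_isSelfAdjoint.mpr (Subtype.prop _)
  have hHM : ∀ p j, Commute (H p) (M j) ∧ Commute (H p) (star (M j)) := by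
    have hsC i j : Commute (star (M i)) (M j) := (hCs j i).symm
    have hssC i j : Commute (star (M i)) (star (M j)) := (hC i j).star_star
    rintro (i | i) j
    · exact ⟨(hC i j).realPart_left (hsC i j), (hCs i j).realPart_left (hssC i j)⟩
    · exact ⟨(hC i j).imaginaryPart_left (hsC i j), (hCs i j).imaginaryPart_left (hssC i j)⟩
  have hHC : ∀ p q, Commute (H p) (H q) := by
    rintro p (j | j)
    · exact ((hHM p j).1.symm.realPart_left (hHM p j).2.symm).symm
    · exact ((hHM p j).1.symm.imaginaryPart_left (hHM p j).2.symm).symm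
  obtain ⟨W, hW, hdiag⟩ := exists_unitary_forall_isDiag_of_isHermitian hH hHC
  refine ⟨W, hW, fun i ↦ ?_⟩
  rw [← realPart_add_I_smul_imaginaryPart (M i), mul_add, add_mul, Matrix.mul_smul,
    Matrix.smul_mul]
  exact (hdiag (.inl i)).add ((hdiag (.inr i)).smul _)

end Diagonalization

section Conjugate

variable {n R : Type*} [CommRing R] [StarRing R]

theorem IsDiag.map_starRingEnd {D : Matrix n n R} (hD : D.IsDiag) :
    D.map (starRingEnd R) = star D := by
  ext i j
  rcases eq_or_ne i j with rfl | hij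
  · rfl
  · simp [hD hij, hD hij.symm]

theorem star_map_starRingEnd (A : Matrix n n R) :
    star (A.map (starRingEnd R)) = (star A).map (starRingEnd R) :=
  (conjTranspose_map _ fun _ ↦ rfl).symm

variable [Fintype n] [DecidableEq n]

theorem map_starRingEnd_mem_unitaryGroup {W : Matrix n n R} (hW : W ∈ unitaryGroup n R) :
    W.map (starRingEnd R) ∈ unitaryGroup n R := by
  rw [mem_unitaryGroup_iff, star_map_starRingEnd, ← Matrix.map_mul,
    mem_unitaryGroup_iff.mp hW, Matrix.map_one _ (map_zero _) (map_one _)]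

theorem map_starRingEnd_eq_of_isDiag {W M : Matrix n n R} (hW : W ∈ unitaryGroup n R)
    (hD : (star W * M * W).IsDiag) :
    M.map (starRingEnd R) = (W.map (starRingEnd R) * star W) * star M *
      star (W.map (starRingEnd R) * star W) := by
  set V := W.map (starRingEnd R)
  have h := hD.map_starRingEnd
  simp only [Matrix.map_mul, star_mul, star_star, ← star_map_starRingEnd] at h
  have hVV : V * star V = 1 := mem_unitaryGroup_iff.mp (map_starRingEnd_mem_unitaryGroup hW)
  calc M.map (starRingEnd R) = V * (star V * M.map (starRingEnd R) * V) * star V := by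
        simp only [← mul_assoc, hVV, one_mul]
        rw [mul_assoc, hVV, mul_one]
    _ = _ := by rw [h]; simp only [star_mul, star_star, mul_assoc]

end Conjugate

theorem _root_.MonoidHom.exists_unitary_forall_map_starRingEnd_eq {n G : Type*} [Fintype n]
    [DecidableEq n] [CommGroup G] (ρ : G →* unitaryGroup n ℂ) :
    ∃ U ∈ unitaryGroup n ℂ, ∀ g, (ρ g : Matrix n n ℂ).map (starRingEnd ℂ) =
      U * star (ρ g : Matrix n n ℂ) * star U := by
  have hC : ∀ a b, Commute (ρ a : Matrix n n ℂ) (ρ b) := fun a b ↦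
    congrArg Subtype.val ((Commute.all a b).map ρ)
  have hCs : ∀ a b, Commute (ρ a : Matrix n n ℂ) (star (ρ b : Matrix n n ℂ)) := fun a b ↦ by
    rw [← Unitary.coe_star, Unitary.star_eq_inv, ← map_inv]
    exact hC a b⁻¹
  obtain ⟨W, hW, hdiag⟩ := exists_unitary_forall_isDiag_of_commute hC hCs
  exact ⟨_, mul_mem (map_starRingEnd_mem_unitaryGroup hW) (Unitary.star_mem hW),
    fun g ↦ map_starRingEnd_eq_of_isDiag hW (hdiag g)⟩

section Blocks

variable {m R : Type*} [CommRing R] [StarRing R]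

def blockSwap (U : Matrix m m R) : Matrix (m ⊕ m) (m ⊕ m) R := fromBlocks 0 (-star U) U 0

theorem star_blockSwap (U : Matrix m m R) : star (blockSwap U) = -blockSwap U := by
  simp [blockSwap, star_eq_conjTranspose, fromBlocks_conjTranspose, fromBlocks_neg]

variable [Fintype m] [DecidableEq m]

theorem fromBlocks_mem_unitaryGroup {A B : Matrix m m R} (hA : A ∈ unitaryGroup m R)
    (hB : B ∈ unitaryGroup m R) : fromBlocks A 0 0 B ∈ unitaryGroup (m ⊕ m) R := by
  have hA' : A * Aᴴ = 1 := mem_unitaryGroup_iff.mp hA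
  have hB' : B * Bᴴ = 1 := mem_unitaryGroup_iff.mp hB
  simp [mem_unitaryGroup_iff, star_eq_conjTranspose, fromBlocks_conjTranspose,
    fromBlocks_multiply, hA', hB']

variable {U : Matrix m m R}

theorem blockSwap_mul_self (hU : U ∈ unitaryGroup m R) :
    blockSwap U * blockSwap U = -1 := by
  simp [blockSwap, fromBlocks_multiply, mem_unitaryGroup_iff.mp hU,
    mem_unitaryGroup_iff'.mp hU]
  rw [← fromBlocks_one, fromBlocks_neg, neg_zero]

theorem blockSwap_mem_unitaryGroup (hU : U ∈ unitaryGroup m R) :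
    blockSwap U ∈ unitaryGroup (m ⊕ m) R := by
  rw [mem_unitaryGroup_iff, star_blockSwap, mul_neg, blockSwap_mul_self hU, neg_neg]

theorem fromBlocks_commutator_blockSwap (hU : U ∈ unitaryGroup m R) (A : Matrix m m R) :
    fromBlocks A 0 0 1 * blockSwap U * star (fromBlocks A 0 0 1) * star (blockSwap U) =
      fromBlocks A 0 0 (U * star A * star U) := by
  have hU' : Uᴴ * U = 1 := mem_unitaryGroup_iff'.mp hU
  rw [star_blockSwap]
  simp [blockSwap, star_eq_conjTranspose, fromBlocks_conjTranspose, fromBlocks_multiply,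
    fromBlocks_neg, Matrix.mul_assoc, hU']

end Blocks

section Commutator

variable {n R : Type*} [Fintype n] [DecidableEq n] [CommRing R] [StarRing R]

theorem commutatorElement_mem_specialUnitaryGroup (A B : unitaryGroup n R) :
    ((⁅A, B⁆ : unitaryGroup n R) : Matrix n n R) ∈ specialUnitaryGroup n R := by
  let φ : unitaryGroup n R →* R := detMonoidHom.comp (unitaryGroup n R).subtype
  have hφ : ∀ C, φ C * φ C⁻¹ = 1 := fun C ↦ by rw [← map_mul, mul_inv_cancel, map_one]
  refine mem_specialUnitaryGroup_iff.mpr ⟨⁅A, B⁆.2, ?_⟩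
  change φ ⁅A, B⁆ = 1
  rw [commutatorElement_def, map_mul, map_mul, map_mul]
  linear_combination (φ B * φ B⁻¹) * hφ A + hφ B

variable [TopologicalSpace R] [IsTopologicalRing R] [ContinuousStar R]

def commutatorSpecialUnitary :
    C(unitaryGroup n R × unitaryGroup n R, specialUnitaryGroup n R) where
  toFun p := ⟨(⁅p.1, p.2⁆ : unitaryGroup n R), commutatorElement_mem_specialUnitaryGroup p.1 p.2⟩
  continuous_toFun := by
    refine Continuous.subtype_mk (continuous_subtype_val.comp ?_) _
    simp only [commutatorElement_def]
    fun_prop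

theorem homotopic_commutatorSpecialUnitary_comp_const_one {X : Type*} [TopologicalSpace X]
    (P : C(X, unitaryGroup n R)) {g : unitaryGroup n R} (hg : Joined g 1) :
    (commutatorSpecialUnitary.comp (P.prodMk (.const X g))).Homotopic (.const X 1) := by
  obtain ⟨γ⟩ := hg
  convert (ContinuousMap.Homotopic.refl commutatorSpecialUnitary).comp
    ((ContinuousMap.Homotopic.refl P).prodMk ⟨γ.toHomotopyConst⟩) using 1
  ext x : 1
  exact Subtype.ext (by simp [commutatorSpecialUnitary])

end Commutator

end Matrix

theorem stmt_0_general (n k : ℕ)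
    (ρ : (Fin n → Circle) →* Matrix.unitaryGroup (Fin k) ℂ)
    (hρ : Continuous ρ) :
    (blockDiagConjMap (fun a => ρ a) hρ).Homotopic
      (ContinuousMap.const (Fin n → Circle) 1) := by
  obtain ⟨U, hU, hconj⟩ := ρ.exists_unitary_forall_map_starRingEnd_eq
  let J : unitaryGroup (Fin k ⊕ Fin k) ℂ := ⟨blockSwap U, blockSwap_mem_unitaryGroup hU⟩
  let P : C(Fin n → Circle, unitaryGroup (Fin k ⊕ Fin k) ℂ) :=
    { toFun a := ⟨fromBlocks (ρ a) 0 0 1, fromBlocks_mem_unitaryGroup (ρ a).2 (one_mem _)⟩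
      continuous_toFun := ((continuous_subtype_val.comp hρ).matrix_fromBlocks continuous_const
        continuous_const continuous_const).subtype_mk _ }
  convert homotopic_commutatorSpecialUnitary_comp_const_one P
    (Unitary.joined_one_of_mul_self_eq_neg_one J (blockSwap_mul_self hU)) using 1
  ext a : 1
  refine Subtype.ext ?_
  simp only [blockDiagConjMap, commutatorSpecialUnitary, ContinuousMap.coe_mk,
    ContinuousMap.comp_apply]
  rw [hconj, ← fromBlocks_commutator_blockSwap hU]
  rfl

/-- For every `n ≥ 1`, `k ≥ 1` and every continuous group homomorphism
`ρ : 𝕋ⁿ → U(k)` of the `n`-torus into the `k × k` unitary group, the continuous map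
`𝕋ⁿ → SU(2k)` given by `a ↦ diag(ρ(a), conj ρ(a))` is null-homotopic, i.e. homotopic
through continuous maps to the constant map with value the `2k × 2k` identity matrix. -/
theorem stmt_0 (n k : ℕ) (hn : 1 ≤ n) (hk : 1 ≤ k)
    (ρ : (Fin n → Circle) →* Matrix.unitaryGroup (Fin k) ℂ)
    (hρ : Continuous ρ) :
    (blockDiagConjMap (fun a => ρ a) hρ).Homotopic
      (ContinuousMap.const (Fin n → Circle) 1) :=
  stmt_0_general n k ρ hρ
end

section
/- Let δ : 𝕋 × 𝕋 × ℝ → ℂ \ {0} be a continuous map satisfying δ(a, b, t) = δ(a, a·b, t + 1) for all a, b ∈ 𝕋 and all t ∈ ℝ. Then the loop 𝕋 → ℂ \ {0} given by b ↦ δ(1, b, 1) is null-homotopic. -/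
open Complex Set Real

private lemma tele_prod (G : ℕ → ℂ) (hG : ∀ i, G i ≠ 0) (n : ℕ) :
    ∏ i ∈ Finset.range n, (G (i + 1) / G i) = G n / G 0 := by
  induction n with
  | zero => simp [div_self (hG 0)]
  | succ n ih =>
      rw [Finset.prod_range_succ, ih, div_mul_div_comm, mul_comm (G 0) (G n),
        mul_div_mul_left _ _ (hG n)]

/-- Key construction: extend a continuous logarithm on the bottom edge of a rectangle
to a continuous logarithm on the whole rectangle. -/
private lemma lift_step {F : ℝ × ℝ → ℂ} (hF : Continuous F) (hF0 : ∀ p, F p ≠ 0)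
    {a₁ b₁ a₂ b₂ : ℝ} (h1 : a₁ ≤ b₁) (h2 : a₂ ≤ b₂)
    {h : ℝ → ℂ} (hh : Continuous h)
    (hlift : ∀ u ∈ Icc a₁ b₁, Complex.exp (h u) = F (u, a₂)) :
    ∃ N : ℝ × ℝ → ℂ, Continuous N ∧
      ∀ p ∈ Icc a₁ b₁ ×ˢ Icc a₂ b₂, Complex.exp (N p) = F p := by
  have hBc : IsCompact (Icc a₁ b₁ ×ˢ Icc a₂ b₂) := isCompact_Icc.prod isCompact_Icc
  have hBne : (Icc a₁ b₁ ×ˢ Icc a₂ b₂).Nonempty :=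
    ⟨(a₁, a₂), by simp [h1, h2]⟩
  obtain ⟨p₀, hp₀, hmin⟩ := hBc.exists_isMinOn hBne hF.norm.continuousOn
  set ε := ‖F p₀‖ with hε
  have hεpos : 0 < ε := norm_pos_iff.mpr (hF0 p₀)
  have hεle : ∀ p ∈ Icc a₁ b₁ ×ˢ Icc a₂ b₂, ε ≤ ‖F p‖ := fun p hp => hmin hp
  obtain ⟨d, hd, hdd⟩ := Metric.uniformContinuousOn_iff.mp
    (hBc.uniformContinuousOn_of_continuous hF.continuousOn) ε hεpos
  obtain ⟨n, hn⟩ := exists_nat_gt ((b₂ - a₂) / d)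
  have hnpos : 0 < (n : ℝ) :=
    lt_of_le_of_lt (div_nonneg (by linarith) hd.le) hn
  set mesh := (b₂ - a₂) / n with hmesh
  have hmesh0 : 0 ≤ mesh := div_nonneg (by linarith) hnpos.le
  have hmeshd : mesh < d := by
    rw [hmesh, div_lt_iff₀ hnpos]
    have := (div_lt_iff₀ hd).mp hn
    nlinarith
  have hnm : (n : ℝ) * mesh = b₂ - a₂ := by
    rw [hmesh]; field_simp
  set c : ℝ → ℝ := fun u => max a₁ (min u b₁) with hc
  set m : ℕ → ℝ → ℝ := fun i t => min t (a₂ + i * mesh) with hm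
  have hcmem : ∀ u, c u ∈ Icc a₁ b₁ :=
    fun u => ⟨le_max_left _ _, max_le h1 (min_le_right _ _)⟩
  have hxmem : ∀ i : ℕ, i ≤ n → a₂ + i * mesh ∈ Icc a₂ b₂ := by
    intro i hi
    have h0 : (0:ℝ) ≤ (i:ℝ) := by positivity
    have hile : (i:ℝ) ≤ (n:ℝ) := by exact_mod_cast hi
    constructor
    · nlinarith
    · nlinarith
  set r : ℕ → ℝ × ℝ → ℂ :=
    fun i p => F (c p.1, m (i + 1) p.2) / F (c p.1, m i p.2) with hr
  have hr0 : ∀ i p, r i p ≠ 0 := fun i p => div_ne_zero (hF0 _) (hF0 _)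
  have hkey : ∀ i : ℕ, i < n → ∀ p : ℝ × ℝ, ‖r i p - 1‖ < 1 := by
    intro i hi p
    have hii1 : a₂ + (i:ℝ) * mesh ≤ a₂ + ((i:ℕ)+1 : ℕ) * mesh := by
      push_cast; nlinarith
    rcases le_or_gt p.2 (a₂ + i * mesh) with ht | ht
    · have e1 : m i p.2 = p.2 := min_eq_left ht
      have e2 : m (i + 1) p.2 = p.2 := min_eq_left (ht.trans hii1)
      simp only [hr, e1, e2]
      rw [div_self (hF0 _)]
      norm_num
    · have hmi : m i p.2 = a₂ + i * mesh := min_eq_right ht.le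
      have hq1mem : (c p.1, m i p.2) ∈ Icc a₁ b₁ ×ˢ Icc a₂ b₂ :=
        ⟨hcmem _, by rw [hmi]; exact hxmem i hi.le⟩
      have hi1 : a₂ + ((i:ℕ)+1 : ℕ) * mesh ∈ Icc a₂ b₂ := hxmem (i+1) hi
      have hlow : a₂ + (i:ℝ) * mesh ≤ m (i + 1) p.2 := le_min ht.le hii1
      have hhigh : m (i + 1) p.2 ≤ a₂ + (i:ℝ) * mesh + mesh := by
        refine (min_le_right _ _).trans ?_
        push_cast; nlinarith
      have hup : m (i + 1) p.2 ∈ Icc a₂ b₂ :=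
        ⟨(hxmem i hi.le).1.trans hlow, (min_le_right _ _).trans hi1.2⟩
      have hq2mem : (c p.1, m (i + 1) p.2) ∈ Icc a₁ b₁ ×ˢ Icc a₂ b₂ := ⟨hcmem _, hup⟩
      have hdist : dist (c p.1, m (i + 1) p.2) (c p.1, m i p.2) < d := by
        rw [Prod.dist_eq]
        have hd2 : dist (m (i + 1) p.2) (m i p.2) < d := by
          rw [hmi, Real.dist_eq]
          have : |m (i + 1) p.2 - (a₂ + (i:ℝ) * mesh)| ≤ mesh :=
            abs_le.mpr ⟨by linarith, by linarith⟩
          linarith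
        simpa [dist_self] using max_lt hd hd2
      have hFd : dist (F (c p.1, m (i + 1) p.2)) (F (c p.1, m i p.2)) < ε :=
        hdd _ hq2mem _ hq1mem hdist
      have hF2 : ε ≤ ‖F (c p.1, m i p.2)‖ := hεle _ hq1mem
      have hrw : r i p - 1 =
          (F (c p.1, m (i + 1) p.2) - F (c p.1, m i p.2)) / F (c p.1, m i p.2) := by
        have hB := hF0 (c p.1, m i p.2)
        simp only [hr]
        rw [sub_div, div_self hB]
      rw [hrw, norm_div, div_lt_one (lt_of_lt_of_le hεpos hF2)]
      calc ‖F (c p.1, m (i + 1) p.2) - F (c p.1, m i p.2)‖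
          = dist (F (c p.1, m (i + 1) p.2)) (F (c p.1, m i p.2)) := (dist_eq_norm _ _).symm
        _ < ε := hFd
        _ ≤ ‖F (c p.1, m i p.2)‖ := hF2
  have hslit : ∀ i : ℕ, i < n → ∀ p, r i p ∈ slitPlane := by
    intro i hi p
    have e : r i p = 1 + (r i p - 1) := by ring
    rw [e]
    exact mem_slitPlane_of_norm_lt_one (hkey i hi p)
  have hcc : Continuous c := continuous_const.max (continuous_id.min continuous_const)
  refine ⟨fun p => h (c p.1) + ∑ i ∈ Finset.range n, Complex.log (r i p), ?_, ?_⟩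
  · apply Continuous.add
    · exact hh.comp (hcc.comp continuous_fst)
    · apply continuous_finset_sum
      intro i hi
      have hric : Continuous (r i) := by
        apply Continuous.div
        · exact hF.comp (((hcc.comp continuous_fst)).prodMk
            (continuous_snd.min continuous_const))
        · exact hF.comp (((hcc.comp continuous_fst)).prodMk
            (continuous_snd.min continuous_const))
        · exact fun p => hF0 _
      rw [continuous_iff_continuousAt]
      intro p
      exact (continuousAt_clog (hslit i (Finset.mem_range.mp hi) p)).comp
        hric.continuousAt
  · rintro ⟨u, t⟩ hp
    rw [Set.mem_prod] at hp
    obtain ⟨hu, ht⟩ := hp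
    have hcu : c u = u := by
      simp only [hc]
      rw [min_eq_left hu.2, max_eq_right hu.1]
    rw [Complex.exp_add, Complex.exp_sum]
    have hprod : ∀ i ∈ Finset.range n, Complex.exp (Complex.log (r i (u, t))) = r i (u, t) :=
      fun i _ => Complex.exp_log (hr0 i _)
    rw [Finset.prod_congr rfl hprod]
    have htel : ∏ i ∈ Finset.range n, r i (u, t)
        = F (c u, m n t) / F (c u, m 0 t) :=
      tele_prod (fun i => F (c u, m i t)) (fun i => hF0 _) n
    rw [htel]
    have hm0 : m 0 t = a₂ := by
      simp only [hm, Nat.cast_zero, zero_mul, add_zero]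
      exact min_eq_right ht.1
    have hmn : m n t = t := by
      simp only [hm]
      have e : a₂ + (n:ℝ) * mesh = b₂ := by linarith
      rw [e]
      exact min_eq_left ht.2
    rw [hm0, hmn, hcu, hlift u hu]
    have hne := hF0 (u, a₂)
    field_simp

/-- A continuous function whose exponential is `1` on an interval is constant there. -/
private lemma const_of_exp_one {h : ℝ → ℂ} (hc : Continuous h) {a b : ℝ}
    (hexp : ∀ t ∈ Icc a b, Complex.exp (h t) = 1)
    {x y : ℝ} (hx : x ∈ Icc a b) (hy : y ∈ Icc a b) : h x = h y := by
  have key : ∀ t ∈ Icc a b, ∃ k : ℤ, h t = ((2 * π * (k:ℝ) : ℝ) : ℂ) * Complex.I := by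
    intro t ht
    obtain ⟨k, hk⟩ := Complex.exp_eq_one_iff.mp (hexp t ht)
    exact ⟨k, by rw [hk]; push_cast; ring⟩
  obtain ⟨kx, hkx⟩ := key x hx
  obtain ⟨ky, hky⟩ := key y hy
  suffices hs : kx = ky by rw [hkx, hky, hs]
  by_contra hne
  set r : ℝ → ℝ := fun t => (h t).im with hrdef
  have hπ := Real.pi_pos
  have hrx : r x = 2 * π * kx := by simp [hrdef, hkx]
  have hry : r y = 2 * π * ky := by simp [hrdef, hky]
  have hrc : Continuous r := Complex.continuous_im.comp hc
  set v := 2 * π * ((min kx ky : ℤ) : ℝ) + π with hv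
  have hvmem : v ∈ uIcc (r x) (r y) := by
    rw [Set.mem_uIcc]
    rcases le_total kx ky with hkk | hkk
    · left
      have h1 : ((kx:ℝ)) + 1 ≤ (ky:ℝ) := by exact_mod_cast (Int.add_one_le_iff.mpr (lt_of_le_of_ne hkk hne))
      have hmineq : (min kx ky : ℤ) = kx := min_eq_left hkk
      constructor
      · rw [hrx, hv, hmineq]; nlinarith
      · rw [hry, hv, hmineq]; nlinarith
    · right
      have h1 : ((ky:ℝ)) + 1 ≤ (kx:ℝ) := by
        exact_mod_cast (Int.add_one_le_iff.mpr (lt_of_le_of_ne hkk (Ne.symm hne)))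
      have hmineq : (min kx ky : ℤ) = ky := min_eq_right hkk
      constructor
      · rw [hry, hv, hmineq]; nlinarith
      · rw [hrx, hv, hmineq]; nlinarith
  obtain ⟨t, htm, htv⟩ := intermediate_value_uIcc hrc.continuousOn hvmem
  have htab : t ∈ Icc a b := uIcc_subset_Icc hx hy htm
  obtain ⟨k, hk⟩ := key t htab
  have hrt : r t = 2 * π * k := by simp [hrdef, hk]
  have heq : 2 * π * (k:ℝ) = 2 * π * ((min kx ky : ℤ) : ℝ) + π := by
    rw [← hrt, htv, hv]
  have hπne : (π:ℝ) ≠ 0 := ne_of_gt hπ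
  have h2' : 2 * (k:ℝ) = 2 * ((min kx ky : ℤ) : ℝ) + 1 := by
    apply mul_left_cancel₀ hπne
    linear_combination heq
  have h3 : (2 * (k - min kx ky) : ℤ) = 1 := by
    have hR : ((2 * (k - min kx ky) : ℤ) : ℝ) = ((1 : ℤ) : ℝ) := by
      push_cast
      push_cast at h2'
      linarith
    exact_mod_cast hR
  omega

/-- Let `δ : 𝕋 × 𝕋 × ℝ → ℂ \ {0}` be a continuous map satisfying
`δ(a, b, t) = δ(a, a·b, t + 1)` for all `a, b ∈ 𝕋`, `t ∈ ℝ`.  Then the loop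
`𝕋 → ℂ \ {0}`, `b ↦ δ(1, b, 1)`, is null-homotopic (homotopic to a constant map). -/
theorem stmt_4 (δ : C(Circle × Circle × ℝ, {z : ℂ // z ≠ 0}))
    (hδ : ∀ (a b : Circle) (t : ℝ), δ (a, b, t) = δ (a, a * b, t + 1)) :
    ContinuousMap.Nullhomotopic
      ⟨fun b : Circle => δ (1, b, 1),
        δ.continuous.comp (by fun_prop)⟩ := by
  have hπ := Real.pi_pos
  -- the scalar function
  set f : ℝ → ℝ → ℝ → ℂ :=
    fun x y t => ((δ (Circle.exp x, Circle.exp y, t) : {z : ℂ // z ≠ 0}) : ℂ) with hf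
  have hf0 : ∀ x y t, f x y t ≠ 0 := fun x y t => (δ _).2
  have hfc3 : Continuous fun p : ℝ × ℝ × ℝ => f p.1 p.2.1 p.2.2 := by
    apply continuous_subtype_val.comp
    apply δ.continuous.comp
    fun_prop
  -- periodicity in x and the shear relation
  have hper : ∀ y t, f (2 * π) y t = f 0 y t := by
    intro y t
    simp only [hf]
    rw [Circle.exp_two_pi, Circle.exp_zero]
  have hshear : ∀ x, f x 0 0 = f x x 1 := by
    intro x
    have h := hδ (Circle.exp x) 1 0
    rw [mul_one, zero_add] at h
    simp only [hf, Circle.exp_zero]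
    exact congrArg Subtype.val h
  -- base lifts on [0, 2π] for t = 1 and t = 0
  have hbase : ∀ t₀ : ℝ, ∃ g : ℝ → ℂ, Continuous g ∧
      ∀ x ∈ Icc 0 (2 * π), Complex.exp (g x) = f x 0 t₀ := by
    intro t₀
    have hF : Continuous fun p : ℝ × ℝ => f p.2 0 t₀ := by
      have : (fun p : ℝ × ℝ => f p.2 0 t₀)
          = (fun q : ℝ × ℝ × ℝ => f q.1 q.2.1 q.2.2) ∘ (fun p => (p.2, 0, t₀)) := rfl
      rw [this]
      exact hfc3.comp (by fun_prop)
    obtain ⟨N, hNc, hNe⟩ := lift_step hF (fun p => hf0 _ _ _)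
      (zero_le_one) (by positivity : (0:ℝ) ≤ 2*π)
      (continuous_const : Continuous fun _ : ℝ => Complex.log (f 0 0 t₀))
      (fun u _ => Complex.exp_log (hf0 0 0 t₀))
    exact ⟨fun x => N (0, x), hNc.comp (by fun_prop),
      fun x hx => hNe (0, x) ⟨⟨le_refl 0, zero_le_one⟩, hx⟩⟩
  obtain ⟨g1, hg1c, hg1e⟩ := hbase 1
  obtain ⟨g0, hg0c, hg0e⟩ := hbase 0
  -- the big lift N of (x, y) ↦ f x y 1 on [0,2π] × [0,4π]
  have hF2 : Continuous fun p : ℝ × ℝ => f p.1 p.2 1 := by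
    have : (fun p : ℝ × ℝ => f p.1 p.2 1)
        = (fun q : ℝ × ℝ × ℝ => f q.1 q.2.1 q.2.2) ∘ (fun p => (p.1, p.2, 1)) := rfl
    rw [this]
    exact hfc3.comp (by fun_prop)
  obtain ⟨N, hNc, hNe⟩ := lift_step hF2 (fun p => hf0 _ _ _)
    (by positivity : (0:ℝ) ≤ 2*π) (by positivity : (0:ℝ) ≤ 4*π)
    hg1c (fun u hu => hg1e u hu)
  -- the lift K of (x, t) ↦ f x 0 t on [0,2π] × [0,1]
  have hF1 : Continuous fun p : ℝ × ℝ => f p.1 0 p.2 := by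
    have : (fun p : ℝ × ℝ => f p.1 0 p.2)
        = (fun q : ℝ × ℝ × ℝ => f q.1 q.2.1 q.2.2) ∘ (fun p => (p.1, 0, p.2)) := rfl
    rw [this]
    exact hfc3.comp (by fun_prop)
  obtain ⟨K, hKc, hKe⟩ := lift_step hF1 (fun p => hf0 _ _ _)
    (by positivity : (0:ℝ) ≤ 2*π) (zero_le_one)
    hg0c (fun u hu => hg0e u hu)
  -- membership helpers
  have h2π4π : (2 * π) ∈ Icc (0:ℝ) (4 * π) := ⟨by positivity, by linarith⟩
  have h2π2π : (2 * π) ∈ Icc (0:ℝ) (2 * π) := ⟨by positivity, le_refl _⟩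
  have h0 : (0:ℝ) ∈ Icc (0:ℝ) (2 * π) := ⟨le_refl _, by positivity⟩
  have h04 : (0:ℝ) ∈ Icc (0:ℝ) (4 * π) := ⟨le_refl _, by positivity⟩
  have h01l : (0:ℝ) ∈ Icc (0:ℝ) 1 := ⟨le_refl _, zero_le_one⟩
  have h11 : (1:ℝ) ∈ Icc (0:ℝ) 1 := ⟨zero_le_one, le_refl _⟩
  -- ★1 : y ↦ N(2π, y) - N(0, y) is constant on [0, 4π]
  have E1 : N (2 * π, 2 * π) - N (0, 2 * π) = N (2 * π, 0) - N (0, 0) := by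
    have hcont : Continuous fun y : ℝ => N (2 * π, y) - N (0, y) := by
      apply Continuous.sub <;> exact hNc.comp (by fun_prop)
    have hexp1 : ∀ y ∈ Icc (0:ℝ) (4 * π),
        Complex.exp (N (2 * π, y) - N (0, y)) = 1 := by
      intro y hy
      rw [Complex.exp_sub, hNe (2 * π, y) ⟨h2π2π, hy⟩, hNe (0, y) ⟨h0, hy⟩,
        hper y 1, div_self (hf0 _ _ _)]
    exact const_of_exp_one hcont hexp1 h2π4π h04
  -- ★2 : t ↦ K(2π, t) - K(0, t) is constant on [0, 1]
  have E2 : K (2 * π, 1) - K (0, 1) = K (2 * π, 0) - K (0, 0) := by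
    have hcont : Continuous fun t : ℝ => K (2 * π, t) - K (0, t) := by
      apply Continuous.sub <;> exact hKc.comp (by fun_prop)
    have hexp1 : ∀ t ∈ Icc (0:ℝ) 1,
        Complex.exp (K (2 * π, t) - K (0, t)) = 1 := by
      intro t ht
      rw [Complex.exp_sub, hKe (2 * π, t) ⟨h2π2π, ht⟩, hKe (0, t) ⟨h0, ht⟩,
        hper 0 t, div_self (hf0 _ _ _)]
    exact const_of_exp_one hcont hexp1 h11 h01l
  -- ★3 : x ↦ K(x, 1) - N(x, 0) is constant on [0, 2π]
  have E3 : K (2 * π, 1) - N (2 * π, 0) = K (0, 1) - N (0, 0) := by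
    have hcont : Continuous fun x : ℝ => K (x, 1) - N (x, 0) := by
      apply Continuous.sub <;> [exact hKc.comp (by fun_prop); exact hNc.comp (by fun_prop)]
    have hexp1 : ∀ x ∈ Icc (0:ℝ) (2 * π),
        Complex.exp (K (x, 1) - N (x, 0)) = 1 := by
      intro x hx
      rw [Complex.exp_sub, hKe (x, 1) ⟨hx, h11⟩, hNe (x, 0) ⟨hx, h04⟩,
        div_self (hf0 _ _ _)]
    exact const_of_exp_one hcont hexp1 h2π2π h0
  -- ★4 : x ↦ K(x, 0) - N(x, x) is constant on [0, 2π]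
  have E4 : K (2 * π, 0) - N (2 * π, 2 * π) = K (0, 0) - N (0, 0) := by
    have hcont : Continuous fun x : ℝ => K (x, 0) - N (x, x) := by
      apply Continuous.sub <;> [exact hKc.comp (by fun_prop); exact hNc.comp (by fun_prop)]
    have hexp1 : ∀ x ∈ Icc (0:ℝ) (2 * π),
        Complex.exp (K (x, 0) - N (x, x)) = 1 := by
      intro x hx
      have hxmem4 : x ∈ Icc (0:ℝ) (4 * π) := ⟨hx.1, by linarith [hx.2]⟩
      rw [Complex.exp_sub, hKe (x, 0) ⟨hx, h01l⟩, hNe (x, x) ⟨hx, hxmem4⟩,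
        hshear x, div_self (hf0 _ _ _)]
    exact const_of_exp_one hcont hexp1 h2π2π h0
  -- winding number of y ↦ f 0 y 1 is zero
  have hq : N (0, 2 * π) = N (0, 0) := by linear_combination -E1 - E2 + E3 - E4
  -- the periodic logarithm
  set γ : ℝ → ℂ := fun y => N (0, y) with hγ
  have hγc : Continuous γ := hNc.comp (by fun_prop)
  have hγe : ∀ y ∈ Icc 0 (2 * π), Complex.exp (γ y) = f 0 y 1 := by
    intro y hy
    exact hNe (0, y) ⟨h0, ⟨hy.1, by linarith [hy.2]⟩⟩
  have hγp : γ 0 = γ (0 + 2 * π) := by rw [zero_add]; exact hq.symm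
  haveI : Fact (0 < 2 * π) := ⟨by positivity⟩
  set Γ : AddCircle (2 * π) → ℂ := AddCircle.liftIco (2 * π) 0 γ with hΓ
  have hΓc : Continuous Γ :=
    AddCircle.liftIco_continuous hγp (by rw [zero_add]; exact hγc.continuousOn)
  set G : Circle → ℂ := fun z => Γ (AddCircle.homeomorphCircle'.symm z) with hG
  have hGc : Continuous G := hΓc.comp (Homeomorph.continuous _)
  have hGe : ∀ b : Circle, Complex.exp (G b) = ((δ (1, b, 1) : {z : ℂ // z ≠ 0}) : ℂ) := by
    intro b
    set z := AddCircle.homeomorphCircle'.symm b with hz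
    set w := AddCircle.equivIco (2 * π) 0 z with hw
    set x : ℝ := (w : ℝ) with hx
    have hxmem : x ∈ Ico (0:ℝ) (0 + 2 * π) := w.2
    have hzx : (x : AddCircle (2 * π)) = z := by
      have h1 := (AddCircle.equivIco (2 * π) 0).symm_apply_apply z
      rw [← hw] at h1
      exact h1
    have hbx : b = Circle.exp x := by
      have h2 : AddCircle.homeomorphCircle' z = b := Homeomorph.apply_symm_apply _ b
      rw [← hzx] at h2
      rw [← h2, AddCircle.homeomorphCircle'_apply_mk]
    have hΓx : Γ z = γ x := by
      rw [← hzx, hΓ]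
      exact AddCircle.liftIco_coe_apply hxmem
    have hxIcc : x ∈ Icc (0:ℝ) (2 * π) := by
      rw [zero_add] at hxmem
      exact ⟨hxmem.1, hxmem.2.le⟩
    show Complex.exp (Γ (AddCircle.homeomorphCircle'.symm b)) = _
    rw [← hz, hΓx, hγe x hxIcc]
    show ((δ (Circle.exp 0, Circle.exp x, 1) : {z : ℂ // z ≠ 0}) : ℂ) = _
    rw [Circle.exp_zero, ← hbx]
  -- build the contraction
  refine ⟨⟨1, one_ne_zero⟩, ?_⟩
  constructor
  refine ContinuousMap.Homotopy.mk
    ⟨fun p : ↥unitInterval × Circle =>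
        (⟨Complex.exp ((1 - (p.1 : ℝ)) * G p.2), Complex.exp_ne_zero _⟩ : {z : ℂ // z ≠ 0}), ?_⟩
    ?_ ?_
  · apply Continuous.subtype_mk
    apply Complex.continuous_exp.comp
    apply Continuous.mul
    · exact (continuous_const.sub (Complex.continuous_ofReal.comp
        (continuous_subtype_val.comp continuous_fst)))
    · exact hGc.comp continuous_snd
  · intro b
    apply Subtype.ext
    simp only [ContinuousMap.coe_mk]
    rw [show ((0 : ↥unitInterval) : ℝ) = 0 from rfl]
    rw [show ((1:ℂ) - (0:ℝ)) * G b = G b by push_cast; ring]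
    exact hGe b
  · intro b
    apply Subtype.ext
    simp only [ContinuousMap.coe_mk, ContinuousMap.const_apply]
    rw [show ((1 : ↥unitInterval) : ℝ) = 1 from rfl]
    rw [show ((1:ℂ) - (1:ℝ)) * G b = 0 by push_cast; ring]
    exact Complex.exp_zero
end

section
/- Let δ : 𝕋 × 𝕋 × ℝ → ℂ \ {0} be a continuous map satisfying δ(a, b, t) = δ(a, a·b, t + 1) for all a, b ∈ 𝕋 and all t ∈ ℝ, and let ρ : 𝕋 × 𝕋 → U(k) be a continuous group homomorphism such that det ρ(a, b) = δ(a, b, 1) for all a, b ∈ 𝕋. Then det ρ(1, b) = 1 for all b ∈ 𝕋; that is, the restriction of ρ to the subgroup {1} × 𝕋 ⊆ 𝕋 × 𝕋 takes values in SU(k). -/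
/-!
Restricted to `t = 0`, the cocycle condition gives `δ(a, 1, 0) = δ(a, a, 1) = δ(a, 1, 1) ψ(a)`
with `ψ(b) = det ρ(1, b)`, so `ψ(a) = δ(a, 1, 0) / δ(a, 1, 1)` is the quotient of two maps
`𝕋 → ℂ \ {0}` joined by the homotopy `t ↦ δ(·, 1, t)`. Lifting this homotopy through the covering
`exp : ℂ → ℂ \ {0}` gives a continuous logarithm `h` of the character `ψ`. Uniqueness of lifts
makes `h - h(1)` additive; being bounded on the compact group, it vanishes, hence `ψ = 1`.
-/

open Complex unitInterval

theorem eq_zero_of_map_mul_of_bounded {G E : Type*} [Monoid G] [NormedAddCommGroup E]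
    [NormedSpace ℝ E] {f : G → E} (hf : ∀ a b, f (a * b) = f a + f b) {C : ℝ}
    (hC : ∀ a, ‖f a‖ ≤ C) (a : G) : f a = 0 := by
  have hpow : ∀ n : ℕ, f (a ^ n) = n • f a := by
    intro n
    induction n with
    | zero => simpa using hf 1 1
    | succ n ih => rw [pow_succ, hf, ih, succ_nsmul]
  by_contra hne
  obtain ⟨n, hn⟩ := exists_nat_gt (C / ‖f a‖)
  rw [div_lt_iff₀ (norm_pos_iff.mpr hne)] at hn
  have hbound := hC (a ^ n)
  rw [hpow, RCLike.norm_nsmul ℝ, nsmul_eq_mul] at hbound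
  linarith

theorem Complex.exists_continuous_log_div_of_homotopy {X : Type*} [TopologicalSpace X]
    (H : C(I × X, {z : ℂ // z ≠ 0})) :
    ∃ L : X → ℂ, Continuous L ∧ ∀ x, exp (L x) = H (0, x) / H (1, x) := by
  let G : C(I × X, {z : ℂ // z ≠ 0}) :=
    ⟨fun p ↦ ⟨H (0, p.2) / H p, div_ne_zero (H _).2 (H _).2⟩,
      ((by fun_prop : Continuous fun p : I × X ↦ (H (0, p.2) : ℂ)).div₀
        (by fun_prop) fun p ↦ (H p).2).subtype_mk _⟩
  have hG₀ : ∀ x, G (0, x) = ⟨exp ((ContinuousMap.const X (0 : ℂ)) x), exp_ne_zero _⟩ :=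
    fun x ↦ Subtype.ext (by simp [G, div_self (H (0, x)).2])
  let lift := isCoveringMap_exp.liftHomotopy G _ hG₀
  refine ⟨fun x ↦ lift (1, x), by fun_prop, fun x ↦ ?_⟩
  exact congr_arg Subtype.val (congr_fun (isCoveringMap_exp.liftHomotopy_lifts G _ hG₀) (1, x))

theorem MonoidHom.eq_one_of_continuous_log {G : Type*} [Monoid G] [TopologicalSpace G]
    [ContinuousMul G] [CompactSpace G] [ConnectedSpace G] (ψ : G →* ℂ) {h : G → ℂ}
    (hh : Continuous h) (hexp : ∀ a, exp (h a) = ψ a) : ψ = 1 := by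
  -- both sides are lifts of `(a, b) ↦ ψ (a * b)` through `exp`, and they agree at `(1, 1)`
  have hlift : (fun p : G × G ↦ h (p.1 * p.2)) = fun p ↦ h p.1 + h p.2 - h 1 := by
    refine isCoveringMap_exp.eq_of_comp_eq (by fun_prop) (by fun_prop) ?_ (1, 1) (by simp)
    funext p
    exact Subtype.ext (by simp [exp_sub, exp_add, hexp])
  have hadd : ∀ a b, h (a * b) - h 1 = (h a - h 1) + (h b - h 1) := fun a b ↦ by
    rw [congr_fun hlift (a, b)]; ring
  obtain ⟨C, hC⟩ :=
    isCompact_univ.exists_bound_of_continuousOn (hh.sub continuous_const).continuousOn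
  ext a
  have hconst := sub_eq_zero.mp <|
    eq_zero_of_map_mul_of_bounded hadd (fun a ↦ hC a (Set.mem_univ a)) a
  rw [← hexp, hconst, hexp, map_one, MonoidHom.one_apply]

theorem stmt_5_general (δ : C(Circle × Circle × ℝ, {z : ℂ // z ≠ 0}))
    (hδ : ∀ (a b : Circle) (t : ℝ), δ (a, b, t) = δ (a, a * b, t + 1))
    (k : ℕ) (ρ : (Circle × Circle) →* Matrix.unitaryGroup (Fin k) ℂ)
    (hdet : ∀ a b : Circle,
      (ρ (a, b) : Matrix (Fin k) (Fin k) ℂ).det = (δ (a, b, 1) : ℂ)) :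
    ∀ b : Circle, (ρ (1, b) : Matrix (Fin k) (Fin k) ℂ).det = 1 := by
  let ψ : Circle →* ℂ := Matrix.detMonoidHom.comp <|
    (Matrix.unitaryGroup (Fin k) ℂ).subtype.comp (ρ.comp (MonoidHom.inr Circle Circle))
  have hψ : ∀ a, (δ (a, 1, 0) : ℂ) = δ (a, 1, 1) * ψ a := fun a ↦ by
    have hsplit : ((a, a) : Circle × Circle) = (a, 1) * (1, a) := by simp
    rw [hδ a 1 0, mul_one, zero_add, ← hdet, ← hdet, hsplit, map_mul]
    simp [ψ, Matrix.det_mul]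
  obtain ⟨L, hL, hexp⟩ := exists_continuous_log_div_of_homotopy
    (δ.comp ⟨fun p : I × Circle ↦ (p.2, 1, (p.1 : ℝ)), by fun_prop⟩)
  have hψL : ∀ a, exp (L a) = ψ a := fun a ↦ by
    simp only [hexp, ContinuousMap.comp_apply, ContinuousMap.coe_mk, Set.Icc.coe_zero,
      Set.Icc.coe_one, hψ]
    exact mul_div_cancel_left₀ _ (δ _).2
  exact DFunLike.congr_fun (ψ.eq_one_of_continuous_log hL hψL)

/-- Let `δ : 𝕋 × 𝕋 × ℝ → ℂ \ {0}` be continuous with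
`δ(a, b, t) = δ(a, a·b, t + 1)`, and let `ρ : 𝕋 × 𝕋 → U(k)` be a continuous group
homomorphism with `det ρ(a, b) = δ(a, b, 1)` for all `a, b`.  Then `det ρ(1, b) = 1`
for all `b ∈ 𝕋`, i.e. the restriction of `ρ` to `{1} × 𝕋` takes values in `SU(k)`. -/
theorem stmt_5 (δ : C(Circle × Circle × ℝ, {z : ℂ // z ≠ 0}))
    (hδ : ∀ (a b : Circle) (t : ℝ), δ (a, b, t) = δ (a, a * b, t + 1))
    (k : ℕ) (ρ : (Circle × Circle) →* Matrix.unitaryGroup (Fin k) ℂ)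
    (hρ : Continuous ρ)
    (hdet : ∀ a b : Circle,
      (ρ (a, b) : Matrix (Fin k) (Fin k) ℂ).det = (δ (a, b, 1) : ℂ)) :
    ∀ b : Circle, (ρ (1, b) : Matrix (Fin k) (Fin k) ℂ).det = 1 :=
  stmt_5_general δ hδ k ρ hdet
end
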